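/- Let M = {(x,y,z) ∈ ℝ³ : z < −1}, set λ(z) = √(−1−z), let μ : ℝ → ℝ be smooth, and let a, b : M → ℝ be smooth functions satisfying ∂a/∂x = 1, ∂a/∂y = −(λ(z) + μ(z)/2), ∂b/∂x = μ(z)/2 − λ(z), ∂b/∂y = 1 at every point of M. Define the vector fields e₁ = (1,0,0), e₂ = (0,1,0), e₃ = (a, b, −4(z+1)) on M. Then at every point of M: [e₁, e₂] = 0, [e₁, e₃] = e₁ + (μ(z)/2 − λ(z))·e₂, and [e₂, e₃] = −(λ(z) + μ(z)/2)·e₁ + e₂. -/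

import Mathlib

/-- `λ(z) = √(-1 - z)` -/
noncomputable def lam (z : ℝ) : ℝ := Real.sqrt (-1 - z)

/-- The coordinate vector field `e₁ = ∂/∂x`. -/
noncomputable def e1 : (Fin 3 → ℝ) → (Fin 3 → ℝ) := fun _ => ![1, 0, 0]

/-- The coordinate vector field `e₂ = ∂/∂y`. -/
noncomputable def e2 : (Fin 3 → ℝ) → (Fin 3 → ℝ) := fun _ => ![0, 1, 0]

/-- The Reeb vector field `e₃ = a ∂x + b ∂y - 4(z+1) ∂z` of the local model of a
`3`-dimensional almost Kenmotsu generalized `(k,μ)`-space. -/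
noncomputable def e3 (a b : (Fin 3 → ℝ) → ℝ) : (Fin 3 → ℝ) → (Fin 3 → ℝ) :=
  fun p => ![a p, b p, -(4 * (p 2 + 1))]

theorem stmt_14 (μ : ℝ → ℝ) (hμ : ContDiff ℝ (⊤ : ℕ∞) μ)
    (a b : (Fin 3 → ℝ) → ℝ)
    (ha : ContDiffOn ℝ (⊤ : ℕ∞) a {p : Fin 3 → ℝ | p 2 < -1})
    (hb : ContDiffOn ℝ (⊤ : ℕ∞) b {p : Fin 3 → ℝ | p 2 < -1})
    (hax : ∀ p : Fin 3 → ℝ, p 2 < -1 → fderiv ℝ a p ![1, 0, 0] = 1)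
    (hay : ∀ p : Fin 3 → ℝ, p 2 < -1 →
      fderiv ℝ a p ![0, 1, 0] = -(lam (p 2) + μ (p 2) / 2))
    (hbx : ∀ p : Fin 3 → ℝ, p 2 < -1 →
      fderiv ℝ b p ![1, 0, 0] = μ (p 2) / 2 - lam (p 2))
    (hby : ∀ p : Fin 3 → ℝ, p 2 < -1 → fderiv ℝ b p ![0, 1, 0] = 1) :
    ∀ p : Fin 3 → ℝ, p 2 < -1 →
      VectorField.lieBracket ℝ e1 e2 p = 0 ∧
      VectorField.lieBracket ℝ e1 (e3 a b) p
        = e1 p + (μ (p 2) / 2 - lam (p 2)) • e2 p ∧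
      VectorField.lieBracket ℝ e2 (e3 a b) p
        = -(lam (p 2) + μ (p 2) / 2) • e1 p + e2 p := by
  intro p hp
  have hopen : IsOpen {p : Fin 3 → ℝ | p 2 < -1} :=
    isOpen_lt (continuous_apply 2) continuous_const
  have hmem := hopen.mem_nhds hp
  have hda : DifferentiableAt ℝ a p :=
    ((ha.contDiffAt hmem).differentiableAt (by simp))
  have hdb : DifferentiableAt ℝ b p :=
    ((hb.contDiffAt hmem).differentiableAt (by simp))
  -- derivative of the third component
  have h3 : HasFDerivAt (fun q : Fin 3 → ℝ => -(4 * (q 2 + 1)))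
      ((-4 : ℝ) • (ContinuousLinearMap.proj 2 : (Fin 3 → ℝ) →L[ℝ] ℝ)) p := by
    have this : HasFDerivAt (fun q : Fin 3 → ℝ => q 2)
        (ContinuousLinearMap.proj (R := ℝ) 2) p := hasFDerivAt_apply 2 p
    have h := (((this.add_const 1).const_mul (4 : ℝ)).neg)
    refine h.congr_fderiv ?_
    ext v
    simp [ContinuousLinearMap.smul_apply]
  set L : (Fin 3 → ℝ) →L[ℝ] (Fin 3 → ℝ) :=
    ContinuousLinearMap.pi
      ![fderiv ℝ a p, fderiv ℝ b p, (-4 : ℝ) • (ContinuousLinearMap.proj 2 : (Fin 3 → ℝ) →L[ℝ] ℝ)] with hL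
  have he3 : HasFDerivAt (e3 a b) L p := by
    rw [hL]
    apply hasFDerivAt_pi.2
    intro i
    fin_cases i
    · simpa [e3] using hda.hasFDerivAt
    · simpa [e3] using hdb.hasFDerivAt
    · simpa [e3] using h3
  have hfe3 : fderiv ℝ (e3 a b) p = L := he3.fderiv
  have hfe1 : fderiv ℝ e1 p = 0 := fderiv_const_apply _
  have hfe2 : fderiv ℝ e2 p = 0 := fderiv_const_apply _
  have hLapp : ∀ v, L v = ![fderiv ℝ a p v, fderiv ℝ b p v, -4 * v 2] := by
    intro v
    rw [hL]
    ext i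
    fin_cases i <;> simp [ContinuousLinearMap.pi_apply]
  refine ⟨?_, ?_, ?_⟩
  · simp [VectorField.lieBracket, hfe1, hfe2]
  · simp only [VectorField.lieBracket, hfe1, hfe3, e1, hLapp]
    ext i
    fin_cases i <;>
      simp [e2, hax p hp, hbx p hp]
  · simp only [VectorField.lieBracket, hfe2, hfe3, e2, hLapp]
    ext i
    fin_cases i <;>
      simp [e1, hay p hp, hby p hp]
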